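/- For every finite convex linear order M and every natural number k, there exists ℓ ∈ ℕ such that for all s, t > ℓ, the s-fold sum M ⊕ M ⊕ ⋯ ⊕ M (s copies) and the t-fold sum M ⊕ M ⊕ ⋯ ⊕ M (t copies) satisfy ⨁_s M ≡_k ⨁_t M. -/

import Mathlib

open FirstOrder Language Filter

/-- Relation symbols for the language with two binary relation symbols. -/
inductive TwoRelSym : ℕ → Type
  | s1 : TwoRelSym 2
  | s2 : TwoRelSym 2

/-- The first-order language with two binary relation symbols. -/
def L2 : FirstOrder.Language := ⟨fun _ => Empty, TwoRelSym⟩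

/-- A pair of binary relations on `X`. -/
structure Rel2 (X : Type) : Type where
  r1 : X → X → Prop
  r2 : X → X → Prop

/-- The `L2`-structure on `X` determined by a pair of binary relations. -/
def Rel2.str {X : Type} (R : Rel2 X) : L2.Structure X where
  funMap := fun f _ => Empty.elim f
  RelMap | .s1 => fun v => R.r1 (v 0) (v 1)
         | .s2 => fun v => R.r2 (v 0) (v 1)

/-- Satisfaction of an `L2`-sentence in the structure given by a pair of relations. -/
def Rel2.Sat {X : Type} (R : Rel2 X) (φ : L2.Sentence) : Prop :=
  @FirstOrder.Language.Sentence.Realize L2 X R.str φ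

namespace FirstOrder.Language.BoundedFormula

/-- The quantifier depth of a first-order formula. -/
def qdepth {L : FirstOrder.Language} {α : Type*} : {n : ℕ} → L.BoundedFormula α n → ℕ
  | _, falsum => 0
  | _, equal _ _ => 0
  | _, rel _ _ => 0
  | _, imp f g => max (qdepth f) (qdepth g)
  | _, all f => qdepth f + 1

end FirstOrder.Language.BoundedFormula

/-- `r` is a strict linear order. -/
def IsSLO {X : Type} (r : X → X → Prop) : Prop :=
  (∀ a, ¬ r a a) ∧ (∀ a b c, r a b → r b c → r a c) ∧ (∀ a b, a ≠ b → r a b ∨ r b a)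

/-- `(r1, r2)` is a convex linear order: `r1` is a strict linear order, `r2` is an
equivalence relation whose classes are `r1`-intervals. -/
def IsConvex {X : Type} (R : Rel2 X) : Prop :=
  IsSLO R.r1 ∧ Equivalence R.r2 ∧
    ∀ a b c, R.r2 a b → R.r1 a c → R.r1 c b → R.r2 a c ∧ R.r2 c b

/-- Isomorphism of pairs of binary relations. -/
def Rel2.Iso {X Y : Type} (R : Rel2 X) (S : Rel2 Y) : Prop :=
  ∃ e : X ≃ Y, (∀ a b, R.r1 a b ↔ S.r1 (e a) (e b)) ∧ (∀ a b, R.r2 a b ↔ S.r2 (e a) (e b))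

/-- Two structures agree on all sentences of quantifier depth at most `k`. -/
def EqK {X Y : Type} (k : ℕ) (R : Rel2 X) (S : Rel2 Y) : Prop :=
  ∀ φ : L2.Sentence, FirstOrder.Language.BoundedFormula.qdepth φ ≤ k → (R.Sat φ ↔ S.Sat φ)

/-- The sum `C ⊕ D` of two convex linear orders: everything in `C` comes before
everything in `D`, with no equivalences across the two parts. -/
def Rel2.oplus {X Y : Type} (R : Rel2 X) (S : Rel2 Y) : Rel2 (X ⊕ Y) where
  r1 a b := match a, b with
    | .inl a, .inl b => R.r1 a b
    | .inl _, .inr _ => True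
    | .inr _, .inl _ => False
    | .inr a, .inr b => S.r1 a b
  r2 a b := match a, b with
    | .inl a, .inl b => R.r2 a b
    | .inr a, .inr b => S.r2 a b
    | _, _ => False

/-- `a` lies in the last `r2`-class: every point above it is equivalent to it. -/
def Rel2.inLast {X : Type} (R : Rel2 X) (a : X) : Prop := ∀ b, R.r1 a b → R.r2 a b

/-- `Ĉ`: add a new greatest point, equivalent exactly to the members of the last class. -/
def Rel2.hat {X : Type} (R : Rel2 X) : Rel2 (Option X) where
  r1 a b := match a, b with
    | some a, some b => R.r1 a b
    | some _, none => True
    | none, _ => False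
  r2 a b := match a, b with
    | some a, some b => R.r2 a b
    | some a, none => R.inLast a
    | none, some b => R.inLast b
    | none, none => True

/-- The one-point convex linear order `•`. -/
def pointR : Rel2 PUnit := ⟨fun _ _ => False, fun _ _ => True⟩

/-- The number of pairs of relations on `{1, …, n}` satisfying `P`. -/
noncomputable def labCount (n : ℕ) (P : Rel2 (Fin n) → Prop) : ℕ :=
  Nat.card {R : Rel2 (Fin n) // P R}

/-- The number of isomorphism classes of pairs of relations on `{1, …, n}` satisfying `P`. -/
noncomputable def unlabCount (n : ℕ) (P : Rel2 (Fin n) → Prop) : ℕ :=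
  Nat.card (Quot (fun R S : {R : Rel2 (Fin n) // P R} => Rel2.Iso R.1 S.1))

/-- `iterOplus R s` is the `(s+1)`-fold sum `R ⊕ R ⊕ ⋯ ⊕ R` (`s+1` copies). -/
def iterOplus {X : Type} (R : Rel2 X) : ℕ → (Y : Type) × Rel2 Y
  | 0 => ⟨X, R⟩
  | s + 1 => ⟨(iterOplus R s).1 ⊕ X, (iterOplus R s).2.oplus R⟩

/-- Truncated-distance similarity of two pairs of naturals. -/
def simm (K x y x' y' : ℕ) : Prop :=
  (x ≤ y ↔ x' ≤ y') ∧ (y ≤ x ↔ y' ≤ x') ∧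
  min (y - x) K = min (y' - x') K ∧ min (x - y) K = min (x' - y') K

lemma simm_diag (K x x' : ℕ) : simm K x x x' x' := by
  refine ⟨?_, ?_, ?_, ?_⟩ <;> omega

lemma simm_comm {K x y x' y' : ℕ} (h : simm K x y x' y') : simm K y x y' x' :=
  ⟨h.2.1, h.1, h.2.2.2, h.2.2.1⟩

lemma simm_swap {K x y x' y' : ℕ} (h : simm K x y x' y') : simm K x' y' x y :=
  ⟨h.1.symm, h.2.1.symm, h.2.2.1.symm, h.2.2.2.symm⟩

lemma simm_mono {K K' x y x' y' : ℕ} (hK : K' ≤ K) (h : simm K x y x' y') :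
    simm K' x y x' y' := by
  obtain ⟨a, b, c, d⟩ := h
  refine ⟨a, b, by omega, by omega⟩

lemma simm_step {K x a x' a' b b' : ℕ} (hxb : x ≤ b) (hx'b' : x' ≤ b') (hba : b < a)
    (hb'a' : b' < a') (e1 : min (b - x) (2 * K) = min (b' - x') (2 * K))
    (e2 : min (a - b) K = min (a' - b') K) : simm K x a x' a' := by
  refine ⟨?_, ?_, ?_, ?_⟩ <;> omega

lemma simm_step' {K x a x' a' c c' : ℕ} (hcx : c ≤ x) (hc'x' : c' ≤ x') (hac : a < c)
    (ha'c' : a' < c') (e1 : min (x - c) (2 * K) = min (x' - c') (2 * K))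
    (e2 : min (c - a) K = min (c' - a') K) : simm K x a x' a' := by
  refine ⟨?_, ?_, ?_, ?_⟩ <;> omega

/-- The EF invariant for partial maps between `{1,…,s}` and `{1,…,t}` with
phantom endpoints `0` and `s+1` / `t+1`. -/
def EFInv (K s t : ℕ) {n : ℕ} (u u' : Fin n → ℕ) : Prop :=
  (∀ i, 1 ≤ u i ∧ u i ≤ s) ∧ (∀ i, 1 ≤ u' i ∧ u' i ≤ t) ∧
  (∀ i j, simm K (u i) (u j) (u' i) (u' j)) ∧
  (∀ i, simm K 0 (u i) 0 (u' i)) ∧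
  (∀ i, simm K (u i) (s + 1) (u' i) (t + 1)) ∧
  simm K 0 (s + 1) 0 (t + 1)

lemma efinv_symm {K s t n : ℕ} {u u' : Fin n → ℕ} (h : EFInv K s t u u') : EFInv K t s u' u := by
  obtain ⟨b1, b2, hp, h0, hs, hl⟩ := h
  exact ⟨b2, b1, fun i j => simm_swap (hp i j), fun i => simm_swap (h0 i),
    fun i => simm_swap (hs i), simm_swap hl⟩

lemma efinv_mono {K K' s t n : ℕ} {u u' : Fin n → ℕ} (hK : K' ≤ K) (h : EFInv K s t u u') :
    EFInv K' s t u u' := by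
  obtain ⟨b1, b2, hp, h0, hs, hl⟩ := h
  exact ⟨b1, b2, fun i j => simm_mono hK (hp i j), fun i => simm_mono hK (h0 i),
    fun i => simm_mono hK (hs i), simm_mono hK hl⟩

/-- The middle-point choice lemma. -/
lemma mid_choice (K b c b' c' a : ℕ) (hK : 1 ≤ K) (h1 : b < a) (h2 : a < c) (h3 : b' < c')
    (h4 : min (c - b) (2 * K) = min (c' - b') (2 * K)) :
    ∃ a', b' < a' ∧ a' < c' ∧ min (a - b) K = min (a' - b') K ∧
      min (c - a) K = min (c' - a') K := by
  rcases le_or_gt (a - b) K with h | h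
  · exact ⟨b' + (a - b), by omega, by omega, by omega, by omega⟩
  rcases le_or_gt (c - a) K with h' | h'
  · exact ⟨c' - (c - a), by omega, by omega, by omega, by omega⟩
  · exact ⟨b' + K, by omega, by omega, by omega, by omega⟩

/-- Key extension lemma: the invariant with cap `2K` can be extended by one point
on the left, matched by a point on the right, preserving the invariant with cap `K`. -/
lemma efinv_ext {s t K n : ℕ} {u u' : Fin n → ℕ}
    (hK : 1 ≤ K) (h : EFInv (2 * K) s t u u') (a : ℕ) (ha1 : 1 ≤ a) (ha2 : a ≤ s) :
    ∃ a', 1 ≤ a' ∧ a' ≤ t ∧ EFInv K s t (Fin.snoc u a) (Fin.snoc u' a') := by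
  obtain ⟨b1, b2, hp, h0, hsE, hl⟩ := h
  set Mt : ℕ → ℕ → Prop := fun x x' =>
    (x = 0 ∧ x' = 0) ∨ (x = s + 1 ∧ x' = t + 1) ∨ ∃ i, u i = x ∧ u' i = x' with hMt
  have MS : ∀ x x' y y', Mt x x' → Mt y y' → simm (2 * K) x y x' y' := by
    rintro x x' y y' (⟨rfl, rfl⟩ | ⟨rfl, rfl⟩ | ⟨i, rfl, rfl⟩)
      (⟨rfl, rfl⟩ | ⟨rfl, rfl⟩ | ⟨j, rfl, rfl⟩)
    · exact simm_diag _ _ _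
    · exact hl
    · exact h0 j
    · exact simm_comm hl
    · exact simm_diag _ _ _
    · exact simm_comm (hsE j)
    · exact simm_comm (h0 i)
    · exact hsE i
    · exact hp i j
  have Mbound : ∀ x x', Mt x x' → x ≤ s + 1 ∧ x' ≤ t + 1 := by
    rintro x x' (⟨rfl, rfl⟩ | ⟨rfl, rfl⟩ | ⟨i, rfl, rfl⟩)
    · omega
    · omega
    · exact ⟨by have := b1 i; omega, by have := b2 i; omega⟩
  -- It suffices to find a matched partner for `a`.
  suffices hsuf : ∃ a', 1 ≤ a' ∧ a' ≤ t ∧ ∀ x x', Mt x x' → simm K x a x' a' by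
    obtain ⟨a', ha'1, ha'2, B⟩ := hsuf
    refine ⟨a', ha'1, ha'2, ?_, ?_, ?_, ?_, ?_, ?_⟩
    · intro i
      refine Fin.lastCases ?_ ?_ i
      · simp only [Fin.snoc_last]; omega
      · intro j; simp only [Fin.snoc_castSucc]; exact b1 j
    · intro i
      refine Fin.lastCases ?_ ?_ i
      · simp only [Fin.snoc_last]; omega
      · intro j; simp only [Fin.snoc_castSucc]; exact b2 j
    · intro i j
      refine Fin.lastCases ?_ ?_ i <;> [skip; intro i'] <;>
        refine Fin.lastCases ?_ ?_ j <;> [skip; intro j'; skip; intro j']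
      · simp only [Fin.snoc_last]; exact simm_diag _ _ _
      · simp only [Fin.snoc_last, Fin.snoc_castSucc]
        exact simm_comm (B _ _ (Or.inr (Or.inr ⟨j', rfl, rfl⟩)))
      · simp only [Fin.snoc_last, Fin.snoc_castSucc]
        exact B _ _ (Or.inr (Or.inr ⟨i', rfl, rfl⟩))
      · simp only [Fin.snoc_castSucc]; exact simm_mono (by omega) (hp i' j')
    · intro i
      refine Fin.lastCases ?_ ?_ i
      · simp only [Fin.snoc_last]; exact B 0 0 (Or.inl ⟨rfl, rfl⟩)
      · intro j; simp only [Fin.snoc_castSucc]; exact simm_mono (by omega) (h0 j)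
    · intro i
      refine Fin.lastCases ?_ ?_ i
      · simp only [Fin.snoc_last]
        exact simm_comm (B _ _ (Or.inr (Or.inl ⟨rfl, rfl⟩)))
      · intro j; simp only [Fin.snoc_castSucc]; exact simm_mono (by omega) (hsE j)
    · exact simm_mono (by omega) hl
  -- Find the partner.
  by_cases hused : ∃ i, u i = a
  · obtain ⟨i, rfl⟩ := hused
    refine ⟨u' i, (b2 i).1, (b2 i).2, fun x x' hx => ?_⟩
    exact simm_mono (by omega) (MS x x' (u i) (u' i) hx (Or.inr (Or.inr ⟨i, rfl, rfl⟩)))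
  · push_neg at hused
    set F : Finset ℕ := insert 0 (insert (s + 1) (Finset.image u Finset.univ)) with hF
    have hmemF : ∀ x, x ∈ F ↔ (x = 0 ∨ x = s + 1 ∨ ∃ i, u i = x) := by
      intro x
      simp [hF, eq_comm]
    have haF : a ∉ F := by
      rw [hmemF]
      push_neg
      exact ⟨by omega, by omega, hused⟩
    have hne1 : ((F.filter (· ≤ a)).Nonempty) :=
      ⟨0, by simp [Finset.mem_filter, (hmemF 0).2 (Or.inl rfl)]⟩
    have hne2 : ((F.filter (a ≤ ·)).Nonempty) :=
      ⟨s + 1, by simp [Finset.mem_filter, (hmemF (s+1)).2 (Or.inr (Or.inl rfl))]; omega⟩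
    obtain ⟨b, hbF, hbA, hmax⟩ : ∃ b, b ∈ F ∧ b ≤ a ∧ ∀ x ∈ F, x ≤ a → x ≤ b := by
      refine ⟨(F.filter (fun x => x ≤ a)).max' hne1, ?_, ?_, ?_⟩
      · have := (F.filter (fun x => x ≤ a)).max'_mem hne1
        exact (Finset.mem_filter.1 this).1
      · have := (F.filter (fun x => x ≤ a)).max'_mem hne1
        exact (Finset.mem_filter.1 this).2
      · intro x hx hxa
        exact Finset.le_max' (F.filter (fun y => y ≤ a)) x (Finset.mem_filter.2 ⟨hx, hxa⟩)
    obtain ⟨c, hcF, hcA, hmin⟩ : ∃ c, c ∈ F ∧ a ≤ c ∧ ∀ x ∈ F, a ≤ x → c ≤ x := by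
      refine ⟨(F.filter (fun x => a ≤ x)).min' hne2, ?_, ?_, ?_⟩
      · have := (F.filter (fun x => a ≤ x)).min'_mem hne2
        exact (Finset.mem_filter.1 this).1
      · have := (F.filter (fun x => a ≤ x)).min'_mem hne2
        exact (Finset.mem_filter.1 this).2
      · intro x hx hxa
        exact Finset.min'_le (F.filter (fun y => a ≤ y)) x (Finset.mem_filter.2 ⟨hx, hxa⟩)
    have hba : b < a := lt_of_le_of_ne hbA (fun hEq => haF (hEq ▸ hbF))
    have hac : a < c := lt_of_le_of_ne hcA (fun hEq => haF (hEq ▸ hcF))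
    have hsplit : ∀ x ∈ F, x ≤ b ∨ c ≤ x := by
      intro x hx
      rcases le_or_gt x a with hxa | hxa
      · exact Or.inl (hmax x hx hxa)
      · exact Or.inr (hmin x hx (le_of_lt hxa))
    -- matched partners for members of F
    have hmatch : ∀ x ∈ F, ∃ x', Mt x x' := by
      intro x hx
      rcases (hmemF x).1 hx with rfl | rfl | ⟨i, rfl⟩
      · exact ⟨0, Or.inl ⟨rfl, rfl⟩⟩
      · exact ⟨t + 1, Or.inr (Or.inl ⟨rfl, rfl⟩)⟩
      · exact ⟨u' i, Or.inr (Or.inr ⟨i, rfl, rfl⟩)⟩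
    obtain ⟨b', hb'⟩ := hmatch b hbF
    obtain ⟨c', hc'⟩ := hmatch c hcF
    have hbc := MS b b' c c' hb' hc'
    have hbc' : b' < c' := by
      obtain ⟨e1, e2, _, _⟩ := hbc
      omega
    obtain ⟨a', ha'1, ha'2, hm1, hm2⟩ :=
      mid_choice K b c b' c' a hK hba hac hbc' hbc.2.2.1
    have hc't : c' ≤ t + 1 := (Mbound c c' hc').2
    refine ⟨a', by omega, by omega, ?_⟩
    intro x x' hx
    have hxF : x ∈ F := by
      rw [hmemF]
      rcases hx with ⟨rfl, rfl⟩ | ⟨rfl, rfl⟩ | ⟨i, rfl, rfl⟩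
      · exact Or.inl rfl
      · exact Or.inr (Or.inl rfl)
      · exact Or.inr (Or.inr ⟨i, rfl⟩)
    rcases hsplit x hxF with hxb | hxc
    · -- x ≤ b
      have hsx := MS x x' b b' hx hb'
      obtain ⟨e1, e2, e3, e4⟩ := hsx
      have hx'b' : x' ≤ b' := e1.1 hxb
      exact simm_step hxb hx'b' hba ha'1 e3 hm1
    · -- c ≤ x
      have hsx := MS c c' x x' hc' hx
      obtain ⟨e1, e2, e3, e4⟩ := hsx
      have hc'x' : c' ≤ x' := e1.1 hxc
      exact simm_step' hxc hc'x' hac ha'2 e3 hm2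

/-! ### Generic Ehrenfeucht–Fraïssé machinery -/

/-- Partial isomorphism condition. -/
def pcond {X Y : Type} (R : Rel2 X) (S : Rel2 Y) {n : ℕ} (v : Fin n → X) (w : Fin n → Y) : Prop :=
  ∀ i j, (v i = v j ↔ w i = w j) ∧ (R.r1 (v i) (v j) ↔ S.r1 (w i) (w j)) ∧
    (R.r2 (v i) (v j) ↔ S.r2 (w i) (w j))

/-- `k`-round back-and-forth extendable partial isomorphisms. -/
def good {X Y : Type} (R : Rel2 X) (S : Rel2 Y) : ℕ → {n : ℕ} → (Fin n → X) → (Fin n → Y) → Prop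
  | 0, _, v, w => pcond R S v w
  | k + 1, _, v, w => pcond R S v w ∧
      (∀ x, ∃ y, good R S k (Fin.snoc v x) (Fin.snoc w y)) ∧
      (∀ y, ∃ x, good R S k (Fin.snoc v x) (Fin.snoc w y))

lemma good_pcond {X Y : Type} {R : Rel2 X} {S : Rel2 Y} {k n : ℕ} {v : Fin n → X}
    {w : Fin n → Y} (h : good R S k v w) : pcond R S v w := by
  cases k with
  | zero => exact h
  | succ m => exact h.1

lemma term_shape {n : ℕ} (t : L2.Term (Empty ⊕ Fin n)) : ∃ i : Fin n, t = Term.var (Sum.inr i) := by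
  cases t with
  | var a =>
    cases a with
    | inl e => exact e.elim
    | inr i => exact ⟨i, rfl⟩
  | func f ts => cases f

lemma good_realize {X Y : Type} (R : Rel2 X) (S : Rel2 Y) {n : ℕ}
    (φ : L2.BoundedFormula Empty n) :
    ∀ (k : ℕ), FirstOrder.Language.BoundedFormula.qdepth φ ≤ k →
    ∀ (ve : Empty → X) (we : Empty → Y) (v : Fin n → X) (w : Fin n → Y), good R S k v w →
    (@FirstOrder.Language.BoundedFormula.Realize L2 X R.str Empty n φ ve v ↔
     @FirstOrder.Language.BoundedFormula.Realize L2 Y S.str Empty n φ we w) := by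
  induction φ with
  | falsum => intro k hk ve we v w hg; exact Iff.rfl
  | equal t₁ t₂ =>
    intro k hk ve we v w hg
    obtain ⟨i, rfl⟩ := term_shape t₁
    obtain ⟨j, rfl⟩ := term_shape t₂
    exact (good_pcond hg i j).1
  | rel r ts =>
    intro k hk ve we v w hg
    cases r with
    | s1 =>
      obtain ⟨i, hi⟩ := term_shape (ts 0)
      obtain ⟨j, hj⟩ := term_shape (ts 1)
      show R.r1 (@Term.realize L2 X R.str _ (Sum.elim ve v) (ts 0))
          (@Term.realize L2 X R.str _ (Sum.elim ve v) (ts 1)) ↔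
        S.r1 (@Term.realize L2 Y S.str _ (Sum.elim we w) (ts 0))
          (@Term.realize L2 Y S.str _ (Sum.elim we w) (ts 1))
      rw [hi, hj]
      exact (good_pcond hg i j).2.1
    | s2 =>
      obtain ⟨i, hi⟩ := term_shape (ts 0)
      obtain ⟨j, hj⟩ := term_shape (ts 1)
      show R.r2 (@Term.realize L2 X R.str _ (Sum.elim ve v) (ts 0))
          (@Term.realize L2 X R.str _ (Sum.elim ve v) (ts 1)) ↔
        S.r2 (@Term.realize L2 Y S.str _ (Sum.elim we w) (ts 0))
          (@Term.realize L2 Y S.str _ (Sum.elim we w) (ts 1))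
      rw [hi, hj]
      exact (good_pcond hg i j).2.2
  | imp f g ihf ihg =>
    intro k hk ve we v w hg
    have h1 : FirstOrder.Language.BoundedFormula.qdepth f ≤ k := by
      have : FirstOrder.Language.BoundedFormula.qdepth (f.imp g) =
        max (FirstOrder.Language.BoundedFormula.qdepth f)
          (FirstOrder.Language.BoundedFormula.qdepth g) := rfl
      omega
    have h2 : FirstOrder.Language.BoundedFormula.qdepth g ≤ k := by
      have : FirstOrder.Language.BoundedFormula.qdepth (f.imp g) =
        max (FirstOrder.Language.BoundedFormula.qdepth f)
          (FirstOrder.Language.BoundedFormula.qdepth g) := rfl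
      omega
    constructor
    · intro h hf
      exact (ihg k h2 ve we v w hg).mp (h ((ihf k h1 ve we v w hg).mpr hf))
    · intro h hf
      exact (ihg k h2 ve we v w hg).mpr (h ((ihf k h1 ve we v w hg).mp hf))
  | all f ih =>
    intro k hk ve we v w hg
    have hd : FirstOrder.Language.BoundedFormula.qdepth f.all =
        FirstOrder.Language.BoundedFormula.qdepth f + 1 := rfl
    cases k with
    | zero => omega
    | succ m =>
      have hfm : FirstOrder.Language.BoundedFormula.qdepth f ≤ m := by omega
      obtain ⟨_, hforth, hback⟩ := hg
      constructor
      · intro hx y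
        obtain ⟨x, hgood⟩ := hback y
        exact (ih m hfm ve we _ _ hgood).mp (hx x)
      · intro hy x
        obtain ⟨y, hgood⟩ := hforth x
        exact (ih m hfm ve we _ _ hgood).mpr (hy y)

lemma good_EqK {X Y : Type} (R : Rel2 X) (S : Rel2 Y) (k : ℕ)
    (h : ∀ (v : Fin 0 → X) (w : Fin 0 → Y), good R S k v w) : EqK k R S := by
  intro φ hφ
  show (@FirstOrder.Language.Sentence.Realize L2 X R.str φ) ↔
    (@FirstOrder.Language.Sentence.Realize L2 Y S.str φ)
  exact good_realize R S φ k hφ _ _ _ _ (h _ _)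

/-- An isomorphism yields `good` at every level. -/
lemma iso_good {X Y : Type} {R : Rel2 X} {S : Rel2 Y} (e : X ≃ Y)
    (h1 : ∀ a b, R.r1 a b ↔ S.r1 (e a) (e b)) (h2 : ∀ a b, R.r2 a b ↔ S.r2 (e a) (e b)) :
    ∀ (k : ℕ) {n : ℕ} (v : Fin n → X), good R S k v (e ∘ v) := by
  intro k
  induction k with
  | zero =>
    intro n v i j
    exact ⟨⟨fun h => by rw [Function.comp_apply, Function.comp_apply, h],
      fun h => e.injective h⟩, h1 _ _, h2 _ _⟩
  | succ m ih =>
    intro n v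
    refine ⟨?_, ?_, ?_⟩
    · intro i j
      exact ⟨⟨fun h => by rw [Function.comp_apply, Function.comp_apply, h],
        fun h => e.injective h⟩, h1 _ _, h2 _ _⟩
    · intro x
      refine ⟨e x, ?_⟩
      have := ih (Fin.snoc v x)
      rwa [Fin.comp_snoc] at this
    · intro y
      refine ⟨e.symm y, ?_⟩
      have := ih (Fin.snoc v (e.symm y))
      rwa [Fin.comp_snoc, e.apply_symm_apply] at this

lemma iso_sat {X Y : Type} {R : Rel2 X} {S : Rel2 Y} (h : Rel2.Iso R S) (φ : L2.Sentence) :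
    R.Sat φ ↔ S.Sat φ := by
  obtain ⟨e, h1, h2⟩ := h
  have hE : EqK (FirstOrder.Language.BoundedFormula.qdepth φ) R S := by
    apply good_EqK
    intro v w
    have := iso_good e h1 h2 (FirstOrder.Language.BoundedFormula.qdepth φ) v
    rwa [show e ∘ v = w from funext fun i => i.elim0] at this
  exact hE φ le_rfl

/-! ### Lexicographic model of iterated sums -/

/-- `s` lexicographic copies of `M`. -/
def lexRel (s : ℕ) {X : Type} (M : Rel2 X) : Rel2 (Fin s × X) where
  r1 a b := a.1.val < b.1.val ∨ (a.1.val = b.1.val ∧ M.r1 a.2 b.2)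
  r2 a b := a.1.val = b.1.val ∧ M.r2 a.2 b.2

lemma efinv_nil {K s t : ℕ} (hK : 1 ≤ K) (hs : K ≤ s + 1) (ht : K ≤ t + 1)
    (u : Fin 0 → ℕ) (u' : Fin 0 → ℕ) : EFInv K s t u u' := by
  refine ⟨fun i => i.elim0, fun i => i.elim0, fun i => i.elim0, fun i => i.elim0,
    fun i => i.elim0, ?_, ?_, ?_, ?_⟩ <;> omega

lemma inv_pcond {X : Type} (M : Rel2 X) {s t K : ℕ} {n : ℕ} {v : Fin n → Fin s × X}
    {w : Fin n → Fin t × X} (hsnd : ∀ i, (v i).2 = (w i).2)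
    (hI : EFInv K s t (fun i => (v i).1.val + 1) (fun i => (w i).1.val + 1)) :
    pcond (lexRel s M) (lexRel t M) v w := by
  intro i j
  obtain ⟨e1, e2, _, _⟩ := hI.2.2.1 i j
  have e1' : (v i).1.val + 1 ≤ (v j).1.val + 1 ↔ (w i).1.val + 1 ≤ (w j).1.val + 1 := e1
  have e2' : (v j).1.val + 1 ≤ (v i).1.val + 1 ↔ (w j).1.val + 1 ≤ (w i).1.val + 1 := e2
  have hfst : (v i).1.val = (v j).1.val ↔ (w i).1.val = (w j).1.val := by omega
  have hlt : (v i).1.val < (v j).1.val ↔ (w i).1.val < (w j).1.val := by omega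
  refine ⟨?_, ?_, ?_⟩
  · rw [Prod.ext_iff, Prod.ext_iff, Fin.ext_iff, Fin.ext_iff, hfst, hsnd i, hsnd j]
  · show _ ∨ _ ↔ _ ∨ _
    rw [hfst, hlt, hsnd i, hsnd j]
  · show _ ∧ _ ↔ _ ∧ _
    rw [hfst, hsnd i, hsnd j]

lemma inv_good {X : Type} (M : Rel2 X) (s t : ℕ) :
    ∀ (k : ℕ) {n : ℕ} (v : Fin n → Fin s × X) (w : Fin n → Fin t × X),
    (∀ i, (v i).2 = (w i).2) →
    EFInv (2 ^ k) s t (fun i => (v i).1.val + 1) (fun i => (w i).1.val + 1) →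
    good (lexRel s M) (lexRel t M) k v w := by
  intro k
  induction k with
  | zero =>
    intro n v w hsnd hI
    exact inv_pcond M hsnd hI
  | succ m ih =>
    intro n v w hsnd hI
    have hpow : (2 : ℕ) ^ (m + 1) = 2 * 2 ^ m := by ring
    rw [hpow] at hI
    have hK : 1 ≤ 2 ^ m := Nat.one_le_two_pow
    refine ⟨inv_pcond M hsnd (efinv_mono (show (2:ℕ)^m ≤ 2*2^m by omega) hI), ?_, ?_⟩
    · intro x
      obtain ⟨a', h1, h2, hI'⟩ := efinv_ext hK hI (x.1.val + 1) (by omega) (by omega)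
      refine ⟨(⟨a' - 1, by omega⟩, x.2), ?_⟩
      apply ih
      · intro i
        refine Fin.lastCases ?_ ?_ i
        · simp only [Fin.snoc_last]
        · intro j; simp only [Fin.snoc_castSucc]; exact hsnd j
      · have ev : (fun i => ((Fin.snoc v x : Fin (n+1) → Fin s × X) i).1.val + 1) =
            Fin.snoc (fun i => (v i).1.val + 1) (x.1.val + 1) := by
          funext i
          refine Fin.lastCases ?_ ?_ i
          · simp only [Fin.snoc_last]
          · intro j; simp only [Fin.snoc_castSucc]
        have ew : (fun i => ((Fin.snoc w (⟨⟨a' - 1, by omega⟩, x.2⟩ :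
              Fin t × X) : Fin (n+1) → Fin t × X) i).1.val + 1) =
            Fin.snoc (fun i => (w i).1.val + 1) a' := by
          funext i
          refine Fin.lastCases ?_ ?_ i
          · simp only [Fin.snoc_last]; omega
          · intro j; simp only [Fin.snoc_castSucc]
        rw [ev, ew]
        exact hI'
    · intro y
      obtain ⟨a', h1, h2, hI'⟩ := efinv_ext hK (efinv_symm hI) (y.1.val + 1) (by omega) (by omega)
      refine ⟨(⟨a' - 1, by omega⟩, y.2), ?_⟩
      apply ih
      · intro i
        refine Fin.lastCases ?_ ?_ i
        · simp only [Fin.snoc_last]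
        · intro j; simp only [Fin.snoc_castSucc]; exact hsnd j
      · have ev : (fun i => ((Fin.snoc v (⟨⟨a' - 1, by omega⟩, y.2⟩ :
              Fin s × X) : Fin (n+1) → Fin s × X) i).1.val + 1) =
            Fin.snoc (fun i => (v i).1.val + 1) a' := by
          funext i
          refine Fin.lastCases ?_ ?_ i
          · simp only [Fin.snoc_last]; omega
          · intro j; simp only [Fin.snoc_castSucc]
        have ew : (fun i => ((Fin.snoc w y : Fin (n+1) → Fin t × X) i).1.val + 1) =
            Fin.snoc (fun i => (w i).1.val + 1) (y.1.val + 1) := by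
          funext i
          refine Fin.lastCases ?_ ?_ i
          · simp only [Fin.snoc_last]
          · intro j; simp only [Fin.snoc_castSucc]
        rw [ev, ew]
        exact efinv_symm hI'

lemma lex_eqK {X : Type} (M : Rel2 X) (k s t : ℕ) (hs : 2 ^ k ≤ s) (ht : 2 ^ k ≤ t) :
    EqK k (lexRel s M) (lexRel t M) := by
  apply good_EqK
  intro v w
  apply inv_good M s t k v w (fun i => i.elim0)
  exact efinv_nil Nat.one_le_two_pow (by omega) (by omega) _ _

/-! ### Isomorphisms with the lexicographic model -/

lemma oplus_iso {X X' Y : Type} {R : Rel2 X} {R' : Rel2 X'} (S : Rel2 Y)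
    (h : Rel2.Iso R R') : Rel2.Iso (R.oplus S) (R'.oplus S) := by
  obtain ⟨e, h1, h2⟩ := h
  refine ⟨Equiv.sumCongr e (Equiv.refl Y), ?_, ?_⟩
  · rintro (a | a) (b | b) <;> simp [Rel2.oplus, h1]
  · rintro (a | a) (b | b) <;> simp [Rel2.oplus, h2]

lemma iso_trans {X Y Z : Type} {R : Rel2 X} {S : Rel2 Y} {T : Rel2 Z}
    (h1 : Rel2.Iso R S) (h2 : Rel2.Iso S T) : Rel2.Iso R T := by
  obtain ⟨e, e1, e2⟩ := h1
  obtain ⟨f, f1, f2⟩ := h2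
  exact ⟨e.trans f, fun a b => (e1 a b).trans (f1 _ _), fun a b => (e2 a b).trans (f2 _ _)⟩

lemma lex_succ_iso {X : Type} (M : Rel2 X) (m : ℕ) :
    Rel2.Iso ((lexRel (m + 1) M).oplus M) (lexRel (m + 2) M) := by
  refine ⟨⟨fun a => match a with
      | .inl p => (⟨p.1.val, by omega⟩, p.2)
      | .inr x => (⟨m + 1, by omega⟩, x),
    fun p => if h : p.1.val < m + 1 then .inl (⟨p.1.val, h⟩, p.2) else .inr p.2,
    ?_, ?_⟩, ?_, ?_⟩
  · rintro (⟨i, x⟩ | x)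
    · simp only [i.isLt, dif_pos]
    · simp only [lt_self_iff_false, dif_neg, not_false_iff]
  · rintro ⟨i, x⟩
    by_cases h : i.val < m + 1
    · simp only [dif_pos h]
    · have hi : i.val = m + 1 := by omega
      simp only [dif_neg h]
      refine Prod.ext ?_ rfl
      exact Fin.ext (by simp [hi])
  · rintro (⟨i, x⟩ | x) (⟨j, y⟩ | y)
    · show _ ↔ (i.val < j.val ∨ (i.val = j.val ∧ _))
      exact Iff.rfl
    · show True ↔ (i.val < m + 1 ∨ _)
      have := i.isLt
      exact iff_of_true trivial (Or.inl (by omega))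
    · show False ↔ (m + 1 < j.val ∨ (m + 1 = j.val ∧ _))
      have := j.isLt
      constructor
      · exact False.elim
      · rintro (h | ⟨h, _⟩) <;> omega
    · show M.r1 x y ↔ (m + 1 < m + 1 ∨ (m + 1 = m + 1 ∧ M.r1 x y))
      constructor
      · intro h; exact Or.inr ⟨rfl, h⟩
      · rintro (h | ⟨_, h⟩); · omega
        · exact h
  · rintro (⟨i, x⟩ | x) (⟨j, y⟩ | y)
    · exact Iff.rfl
    · show False ↔ (i.val = m + 1 ∧ _)
      have := i.isLt
      constructor
      · exact False.elim
      · rintro ⟨h, _⟩; omega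
    · show False ↔ (m + 1 = j.val ∧ _)
      have := j.isLt
      constructor
      · exact False.elim
      · rintro ⟨h, _⟩; omega
    · show M.r2 x y ↔ (m + 1 = m + 1 ∧ M.r2 x y)
      exact ⟨fun h => ⟨rfl, h⟩, fun h => h.2⟩

lemma iter_iso {X : Type} (M : Rel2 X) : ∀ n : ℕ, Rel2.Iso (iterOplus M n).2 (lexRel (n + 1) M)
  | 0 => by
    refine ⟨⟨fun x => (0, x), fun p => p.2, fun x => rfl, ?_⟩, ?_, ?_⟩
    · rintro ⟨i, x⟩
      refine Prod.ext ?_ rfl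
      exact Fin.ext (by omega)
    · intro a b
      simp [iterOplus, lexRel]
      exact Iff.rfl
    · intro a b
      simp [iterOplus, lexRel]
      exact Iff.rfl
  | n + 1 => iso_trans (oplus_iso M (iter_iso M n)) (lex_succ_iso M n)

/-- **For any finite convex linear order `M` and any `k`, all sufficiently long iterated
sums `⨁_s M` are `≡_k`-equivalent**: there is `ℓ` such that for all `s, t > ℓ`,
`⨁_s M ≡_k ⨁_t M` (where `⨁_s M` is the `s`-fold sum `M ⊕ ⋯ ⊕ M`). -/
theorem iterOplus_eqK {X : Type} [Finite X] (M : Rel2 X) (hM : IsConvex M) (k : ℕ) :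
    ∃ ℓ : ℕ, ∀ s t : ℕ, ℓ < s → ℓ < t →
      EqK k (iterOplus M (s - 1)).2 (iterOplus M (t - 1)).2 := by
  refine ⟨2 ^ k, fun s t hs ht => ?_⟩
  have hK : 1 ≤ 2 ^ k := Nat.one_le_two_pow
  have h1 : Rel2.Iso (iterOplus M (s - 1)).2 (lexRel (s - 1 + 1) M) := iter_iso M (s - 1)
  have h2 : Rel2.Iso (iterOplus M (t - 1)).2 (lexRel (t - 1 + 1) M) := iter_iso M (t - 1)
  have es : s - 1 + 1 = s := by omega
  have et : t - 1 + 1 = t := by omega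
  rw [es] at h1
  rw [et] at h2
  intro φ hφ
  rw [iso_sat h1 φ, iso_sat h2 φ]
  exact lex_eqK M k s t (by omega) (by omega) φ hφ
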